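/- Let K be a compact metric space, f : K → K continuous, and μ an ergodic f-invariant Borel probability measure on K. Then for μ-almost every point x in K, the sequence of empirical measures (1/n) · Σ_{k=0}^{n-1} δ(f^k(x)) converges weakly-* to μ. -/

import Mathlib

/-!
The core is Birkhoff's pointwise ergodic theorem for bounded measurable `g`, proved through the
maximal ergodic inequality. The running maxima `Mₙ = max (0, S₁, …, Sₙ)` of the Birkhoff sums
satisfy `Mₙ₊₁ - Mₙ ∘ f ≤ g` on `{Mₙ₊₁ > 0}` and `≤ 0` elsewhere; integrating, with `f` measure
preserving, gives `∫ g ≥ 0` over the set where some `Sₙ` is positive.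

The limsup of the Birkhoff averages is `f`-invariant, hence a.e. equal to a constant `c`. If
`c > q > ∫ g`, then a.e. some Birkhoff sum of `g - q` is positive, and the maximal inequality
yields `∫ g ≥ q`, a contradiction. Applying this to `g` and `-g` gives a.e. convergence for a
single continuous function; a countable dense subset of `C(K, ℝ)` settles all of them at once,
because at a fixed point the set of `φ` whose averages converge to `∫ φ dμ` is closed (all maps
involved are 1-Lipschitz in `φ`).
-/

open MeasureTheory Filter Topology Set

theorem Filter.limsup_add_of_tendsto_zero {ι : Type*} {l : Filter ι} [l.NeBot] {u v : ι → ℝ}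
    (hu : IsBoundedUnder (· ≤ ·) l u) (hu' : IsBoundedUnder (· ≥ ·) l u)
    (hv : Tendsto v l (𝓝 0)) : limsup (u + v) l = limsup u l := by
  apply le_antisymm
  · simpa [hv.limsup_eq] using
      limsup_add_le hu' hu hv.isBoundedUnder_ge.isCoboundedUnder_le hv.isBoundedUnder_le
  · simpa [hv.liminf_eq] using
      le_limsup_add hu hu'.isCoboundedUnder_le hv.isBoundedUnder_le hv.isBoundedUnder_ge

theorem Filter.tendsto_of_limsup_le_of_limsup_neg_le {ι : Type*} {l : Filter ι} {u : ι → ℝ}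
    {a : ℝ} (hu : IsBoundedUnder (· ≤ ·) l u) (hu' : IsBoundedUnder (· ≥ ·) l u)
    (h : limsup u l ≤ a) (h' : limsup (-u) l ≤ -a) : Tendsto u l (𝓝 a) := by
  refine tendsto_order.2 ⟨fun b hb ↦ ?_, fun b hb ↦ eventually_lt_of_limsup_lt (h.trans_lt hb) hu⟩
  filter_upwards [eventually_lt_of_limsup_lt (h'.trans_lt (neg_lt_neg hb))
    (isBoundedUnder_le_neg.2 hu')] with n hn
  exact neg_lt_neg_iff.1 hn

section BirkhoffAverage

variable {α : Type*}

theorem norm_birkhoffAverage_le (𝕜 : Type*) [RCLike 𝕜] {E : Type*} [NormedAddCommGroup E]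
    [NormedSpace 𝕜 E] {g : α → E} {C : ℝ} (hg : ∀ x, ‖g x‖ ≤ C) (f : α → α) (n : ℕ) (x : α) :
    ‖birkhoffAverage 𝕜 f g n x‖ ≤ C := by
  rcases n.eq_zero_or_pos with rfl | hn
  · simpa using (norm_nonneg _).trans (hg x)
  rw [birkhoffAverage, norm_smul, norm_inv, RCLike.norm_natCast, inv_mul_le_iff₀ (by positivity)]
  calc ‖birkhoffSum f g n x‖ ≤ ∑ k ∈ Finset.range n, ‖g (f^[k] x)‖ := norm_sum_le _ _
    _ ≤ n * C := by simpa using Finset.sum_le_card_nsmul (Finset.range n) _ _ fun k _ ↦ hg (f^[k] x)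

theorem isBoundedUnder_abs_birkhoffAverage {g : α → ℝ} (hg : Bornology.IsBounded (range g))
    (f : α → α) (x : α) :
    IsBoundedUnder (· ≤ ·) atTop (fun n ↦ |birkhoffAverage ℝ f g n x|) := by
  obtain ⟨C, hC⟩ := isBounded_iff_forall_norm_le.1 hg
  exact isBoundedUnder_of
    ⟨C, fun n ↦ norm_birkhoffAverage_le ℝ (fun y ↦ hC _ (mem_range_self y)) f n x⟩

theorem limsup_birkhoffAverage_apply {g : α → ℝ} (hg : Bornology.IsBounded (range g))
    (f : α → α) (x : α) :
    limsup (birkhoffAverage ℝ f g · (f x)) atTop = limsup (birkhoffAverage ℝ f g · x) atTop := by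
  obtain ⟨hle, hge⟩ := isBoundedUnder_le_abs.1 (isBoundedUnder_abs_birkhoffAverage hg f x)
  rw [← limsup_add_of_tendsto_zero hle hge
    (tendsto_birkhoffAverage_apply_sub_birkhoffAverage' ℝ hg f x)]
  congr 1
  ext n
  simp

theorem exists_birkhoffSum_sub_const_pos {f : α → α} {g : α → ℝ} {x : α} {q : ℝ}
    (hbdd : IsBoundedUnder (· ≥ ·) atTop (birkhoffAverage ℝ f g · x))
    (hq : q < limsup (birkhoffAverage ℝ f g · x) atTop) :
    ∃ n, 0 < birkhoffSum f (g - fun _ ↦ q) n x := by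
  obtain ⟨n, hn, hqn⟩ :=
    frequently_atTop.1 (frequently_lt_of_lt_limsup hbdd.isCoboundedUnder_le hq) 1
  have hn' : (0 : ℝ) < n := by exact_mod_cast hn
  refine ⟨n, ?_⟩
  rw [birkhoffAverage, smul_eq_mul, lt_inv_mul_iff₀ hn'] at hqn
  simpa [birkhoffSum_sub, birkhoffSum] using hqn

variable [MeasurableSpace α] {f : α → α} {g : α → ℝ}

theorem measurable_birkhoffSum (hf : Measurable f) (hg : Measurable g) (n : ℕ) :
    Measurable (birkhoffSum f g n) :=
  Finset.measurable_sum _ fun k _ ↦ hg.comp (hf.iterate k)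

theorem measurable_birkhoffAverage (hf : Measurable f) (hg : Measurable g) (n : ℕ) :
    Measurable (birkhoffAverage ℝ f g n) :=
  (measurable_birkhoffSum hf hg n).const_smul (n : ℝ)⁻¹

end BirkhoffAverage

section MaximalErgodic

variable {α : Type*} {f : α → α} {g : α → ℝ}

-- `birkhoffMax f g n = max 0 (birkhoffSum f g 1) … (birkhoffSum f g n)`.
noncomputable def birkhoffMax (f : α → α) (g : α → ℝ) : ℕ → α → ℝ
  | 0 => 0
  | n + 1 => fun x ↦ max 0 (g x + birkhoffMax f g n (f x))

theorem birkhoffMax_nonneg (n : ℕ) (x : α) : 0 ≤ birkhoffMax f g n x := by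
  cases n
  · exact le_rfl
  · exact le_max_left _ _

theorem birkhoffMax_le_succ (n : ℕ) (x : α) : birkhoffMax f g n x ≤ birkhoffMax f g (n + 1) x := by
  induction n generalizing x with
  | zero => exact birkhoffMax_nonneg 1 x
  | succ n ih =>
    show max 0 _ ≤ max 0 _
    gcongr
    exact ih (f x)

theorem birkhoffSum_le_birkhoffMax (n : ℕ) (x : α) : birkhoffSum f g n x ≤ birkhoffMax f g n x := by
  induction n generalizing x with
  | zero => simp [birkhoffMax]
  | succ n ih =>
    rw [birkhoffSum_succ']
    exact le_max_of_le_right (by gcongr; exact ih (f x))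

theorem birkhoffMax_succ_of_pos {n : ℕ} {x : α} (h : 0 < birkhoffMax f g (n + 1) x) :
    birkhoffMax f g (n + 1) x = g x + birkhoffMax f g n (f x) :=
  max_eq_right (not_lt.1 fun hlt ↦ h.ne' (max_eq_left hlt.le))

theorem exists_birkhoffMax_le_birkhoffSum {n : ℕ} {x : α} (h : 0 < birkhoffMax f g n x) :
    ∃ k, birkhoffMax f g n x ≤ birkhoffSum f g k x := by
  induction n generalizing x with
  | zero => exact absurd h (lt_irrefl 0)
  | succ n ih =>
    rw [birkhoffMax_succ_of_pos h]
    rcases (birkhoffMax_nonneg (f := f) (g := g) n (f x)).eq_or_lt with h0 | hpos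
    · exact ⟨1, by rw [← h0, add_zero, birkhoffSum_one]⟩
    · obtain ⟨k, hk⟩ := ih hpos
      exact ⟨k + 1, by rw [birkhoffSum_succ']; gcongr⟩

theorem setOf_exists_birkhoffSum_pos_eq_iUnion :
    {x | ∃ n, 0 < birkhoffSum f g n x} = ⋃ n, {x | 0 < birkhoffMax f g (n + 1) x} := by
  ext x
  simp only [mem_ofPred_eq, mem_iUnion]
  constructor
  · rintro ⟨n, hn⟩
    exact ⟨n, (hn.trans_le (birkhoffSum_le_birkhoffMax n x)).trans_le (birkhoffMax_le_succ n x)⟩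
  · rintro ⟨n, hn⟩
    obtain ⟨k, hk⟩ := exists_birkhoffMax_le_birkhoffSum hn
    exact ⟨k, hn.trans_le hk⟩

theorem birkhoffMax_succ_sub_le_indicator (n : ℕ) (x : α) :
    birkhoffMax f g (n + 1) x - birkhoffMax f g n (f x) ≤
      {y | 0 < birkhoffMax f g (n + 1) y}.indicator g x := by
  by_cases h : x ∈ {y | 0 < birkhoffMax f g (n + 1) y}
  · rw [indicator_of_mem h, birkhoffMax_succ_of_pos h, add_sub_cancel_right]
  · rw [indicator_of_notMem h, le_antisymm (not_lt.1 h) (birkhoffMax_nonneg _ x), zero_sub,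
      neg_nonpos]
    exact birkhoffMax_nonneg n (f x)

variable [MeasurableSpace α] {μ : Measure α}

theorem measurable_birkhoffMax (hf : Measurable f) (hg : Measurable g) (n : ℕ) :
    Measurable (birkhoffMax f g n) := by
  induction n with
  | zero => exact measurable_const
  | succ n ih => exact measurable_const.max (hg.add (ih.comp hf))

theorem integrable_birkhoffMax (hf : MeasurePreserving f μ μ) (hgm : Measurable g)
    (hg : Integrable g μ) (n : ℕ) : Integrable (birkhoffMax f g n) μ := by
  induction n with
  | zero => exact integrable_zero _ _ μ
  | succ n ih =>
    exact (integrable_zero _ _ μ).sup (hg.add ((hf.integrable_comp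
      (measurable_birkhoffMax hf.measurable hgm n).aestronglyMeasurable).2 ih))

theorem MeasureTheory.MeasurePreserving.setIntegral_setOf_exists_birkhoffSum_pos_nonneg
    (hf : MeasurePreserving f μ μ) (hgm : Measurable g) (hg : Integrable g μ) :
    0 ≤ ∫ x in {x | ∃ n, 0 < birkhoffSum f g n x}, g x ∂μ := by
  set M := birkhoffMax f g
  set E : ℕ → Set α := fun n ↦ {x | 0 < M (n + 1) x}
  have hMm := measurable_birkhoffMax hf.measurable hgm
  have hM := integrable_birkhoffMax hf hgm hg
  have hE : ∀ n, MeasurableSet (E n) := fun n ↦ measurableSet_lt measurable_const (hMm (n + 1))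
  have hE_mono : Monotone E := monotone_nat_of_le_succ fun n x hx ↦
    hx.trans_le (birkhoffMax_le_succ (n + 1) x)
  have hMf_int : ∀ n, Integrable (fun x ↦ M n (f x)) μ := fun n ↦
    (hf.integrable_comp (hMm n).aestronglyMeasurable).2 (hM n)
  have hMf : ∀ n, ∫ x, M n (f x) ∂μ = ∫ x, M n x ∂μ := fun n ↦ by
    rw [← integral_map hf.measurable.aemeasurable (hMm n).aestronglyMeasurable, hf.map_eq]
  have hstep : ∀ n, 0 ≤ ∫ x in E n, g x ∂μ := fun n ↦ calc
    0 ≤ ∫ x, M (n + 1) x ∂μ - ∫ x, M n x ∂μ :=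
      sub_nonneg.2 (integral_mono (hM n) (hM (n + 1)) (birkhoffMax_le_succ n))
    _ = ∫ x, (M (n + 1) x - M n (f x)) ∂μ := by
      rw [integral_sub (hM (n + 1)) (hMf_int n), hMf]
    _ ≤ ∫ x, (E n).indicator g x ∂μ :=
      integral_mono ((hM (n + 1)).sub (hMf_int n)) (hg.indicator (hE n))
        (birkhoffMax_succ_sub_le_indicator n)
    _ = ∫ x in E n, g x ∂μ := integral_indicator (hE n)
  rw [setOf_exists_birkhoffSum_pos_eq_iUnion]
  exact ge_of_tendsto' (tendsto_setIntegral_of_monotone hE hE_mono hg.integrableOn) hstep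

end MaximalErgodic

section Ergodic

variable {α : Type*} [MeasurableSpace α] {μ : Measure α} {f : α → α} {g : α → ℝ}

theorem Ergodic.ae_limsup_birkhoffAverage_le [IsProbabilityMeasure μ] (hf : Ergodic f μ)
    (hgm : Measurable g) (hg : Bornology.IsBounded (range g)) :
    ∀ᵐ x ∂μ, limsup (birkhoffAverage ℝ f g · x) atTop ≤ ∫ x, g x ∂μ := by
  set L : α → ℝ := fun x ↦ limsup (birkhoffAverage ℝ f g · x) atTop
  have hLm : Measurable L :=
    Measurable.limsup fun n ↦ measurable_birkhoffAverage hf.measurable hgm n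
  have hLf : L ∘ f = L := funext (limsup_birkhoffAverage_apply hg f)
  obtain ⟨c, hc⟩ := hf.toPreErgodic.ae_eq_const_of_ae_eq_comp hLm hLf
  suffices c ≤ ∫ x, g x ∂μ from hc.mono fun x hx ↦ hx.trans_le this
  by_contra! hlt
  obtain ⟨q, hgq, hqc⟩ := exists_between hlt
  have hpos : ∀ᵐ x ∂μ, x ∈ {x | ∃ n, 0 < birkhoffSum f (g - fun _ ↦ q) n x} := by
    filter_upwards [hc] with x hx
    exact exists_birkhoffSum_sub_const_pos
      (isBoundedUnder_le_abs.1 (isBoundedUnder_abs_birkhoffAverage hg f x)).2 (hqc.trans_eq hx.symm)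
  obtain ⟨C, hC⟩ := isBounded_iff_forall_norm_le.1 hg
  have hint : Integrable g μ :=
    .of_bound hgm.aestronglyMeasurable C (ae_of_all _ fun x ↦ hC _ (mem_range_self x))
  have := hf.toMeasurePreserving.setIntegral_setOf_exists_birkhoffSum_pos_nonneg
    (hgm.sub measurable_const) (hint.sub (integrable_const q))
  rw [Measure.restrict_eq_self_of_ae_mem hpos] at this
  simp only [Pi.sub_apply, integral_sub hint (integrable_const q), integral_const, probReal_univ,
    smul_eq_mul, one_mul] at this
  linarith

theorem Ergodic.ae_tendsto_birkhoffAverage [IsProbabilityMeasure μ] (hf : Ergodic f μ)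
    (hgm : Measurable g) (hg : Bornology.IsBounded (range g)) :
    ∀ᵐ x ∂μ, Tendsto (birkhoffAverage ℝ f g · x) atTop (𝓝 (∫ x, g x ∂μ)) := by
  have hg' : Bornology.IsBounded (range (-g)) :=
    hg.neg.subset (range_subset_iff.2 fun x ↦ by simp)
  filter_upwards [hf.ae_limsup_birkhoffAverage_le hgm hg,
    hf.ae_limsup_birkhoffAverage_le hgm.neg hg'] with x hle hle'
  obtain ⟨hb, hb'⟩ := isBoundedUnder_le_abs.1 (isBoundedUnder_abs_birkhoffAverage hg f x)
  simp only [birkhoffAverage_neg, Pi.neg_apply, integral_neg] at hle'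
  exact tendsto_of_limsup_le_of_limsup_neg_le hb hb' hle hle'

end Ergodic

theorem isClosed_setOf_tendsto_birkhoffAverage_integral {K : Type*} [TopologicalSpace K]
    [CompactSpace K] [MeasurableSpace K] [OpensMeasurableSpace K] (μ : Measure K)
    [IsProbabilityMeasure μ] (f : K → K) (x : K) :
    IsClosed {φ : C(K, ℝ) | Tendsto (birkhoffAverage ℝ f φ · x) atTop (𝓝 (∫ z, φ z ∂μ))} := by
  refine Equicontinuous.isClosed_setOfPred_tendsto
    (LipschitzWith.uniformEquicontinuous _ 1 fun n ↦ .of_dist_le_mul fun φ ψ ↦ ?_).equicontinuous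
    (LipschitzWith.continuous (K := 1) (.of_dist_le_mul fun φ ψ ↦ ?_))
  · rw [dist_eq_norm, dist_eq_norm, ← Pi.sub_apply, ← Pi.sub_apply, ← birkhoffAverage_sub,
      ← ContinuousMap.coe_sub, NNReal.coe_one, one_mul]
    exact norm_birkhoffAverage_le ℝ (φ - ψ).norm_coe_le_norm f n x
  · have hint : ∀ φ : C(K, ℝ), Integrable φ μ := fun φ ↦
      φ.continuous.integrable_of_hasCompactSupport (HasCompactSupport.of_compactSpace φ)
    rw [dist_eq_norm, dist_eq_norm, ← integral_sub (hint φ) (hint ψ), NNReal.coe_one, one_mul]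
    simpa using norm_integral_le_of_norm_le_const (μ := μ) (ae_of_all _ (φ - ψ).norm_coe_le_norm)

theorem stmt0 {K : Type*} [MetricSpace K] [CompactSpace K] [MeasurableSpace K] [BorelSpace K]
    (f : K → K) (μ : Measure K) [IsProbabilityMeasure μ]
    (herg : Ergodic f μ) :
    ∀ᵐ x ∂μ, ∀ φ : K → ℝ, Continuous φ →
      Tendsto (fun n : ℕ => (∑ k ∈ Finset.range n, φ (f^[k] x)) / (n : ℝ))
        atTop (𝓝 (∫ z, φ z ∂μ)) := by
  obtain ⟨D, hD_countable, hD_dense⟩ := TopologicalSpace.exists_countable_dense C(K, ℝ)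
  have hD : ∀ᵐ x ∂μ, ∀ ψ ∈ D, Tendsto (birkhoffAverage ℝ f ψ · x) atTop (𝓝 (∫ z, ψ z ∂μ)) :=
    (ae_ball_iff hD_countable).2 fun ψ _ ↦
      herg.ae_tendsto_birkhoffAverage ψ.continuous.measurable
        (isCompact_range ψ.continuous).isBounded
  filter_upwards [hD] with x hx φ hφ
  have hclosure := (isClosed_setOf_tendsto_birkhoffAverage_integral μ f x).closure_subset_iff.2 hx
  rw [hD_dense.closure_eq] at hclosure
  simpa [birkhoffAverage, birkhoffSum, div_eq_inv_mul] using hclosure (mem_univ ⟨φ, hφ⟩)
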